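/- Let n'_g denote the number of gapsets of genus g with depth at most 3. Then for all g ≥ 3, n'_{g−1} + n'_{g−2} ≤ n'_g ≤ n'_{g−1} + n'_{g−2} + n'_{g−3}. -/

import Mathlib

def IsGapset (G : Finset ℕ) : Prop :=
  0 ∉ G ∧ ∀ z ∈ G, ∀ x y : ℕ, 0 < x → 0 < y → x + y = z → x ∈ G ∨ y ∈ G

def IsNumSgp (S : Set ℕ) : Prop :=
  0 ∈ S ∧ (∀ a ∈ S, ∀ b ∈ S, a + b ∈ S) ∧ Sᶜ.Finite

noncomputable def mult (G : Finset ℕ) : ℕ := sInf {s : ℕ | 0 < s ∧ s ∉ G}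

noncomputable def kunz (G : Finset ℕ) (i : ℕ) : ℕ := (G.filter (fun z => z % mult G = i)).card

noncomputable def gapConductor (G : Finset ℕ) : ℕ := sInf {s : ℕ | 0 < s ∧ ∀ n : ℕ, s + n ∉ G}

noncomputable def gapDepth (G : Finset ℕ) : ℕ := (gapConductor G + mult G - 1) / mult G

def KunzIneq (m : ℕ) (k : ℕ → ℕ) : Prop :=
  (∀ i j : ℕ, 1 ≤ i → i ≤ j → j ≤ m - 1 → i + j < m → k (i + j) ≤ k i + k j) ∧
  (∀ i j : ℕ, 1 ≤ i → i ≤ j → j ≤ m - 1 → m < i + j → k (i + j - m) ≤ k i + k j + 1)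

noncomputable def nDepth3 (g : ℕ) : ℕ :=
  {G : Finset ℕ | IsGapset G ∧ G.card = g ∧ gapDepth G ≤ 3}.ncard

/-!
A gapset of multiplicity `m` and depth at most 3 has the form
`[1, m - 1] ∪ (m + F₁) ∪ (2m + F₂)` with `F₁, F₂ ⊆ [1, m - 1]`, and the gapset condition says
exactly that every splitting `z = a + b` (`a, b ≥ 0`) of some `z ∈ F₂` has `a ∈ F₁` or `b ∈ F₁`.
Its genus is `m - 1 + #F₁ + #F₂`. Raising `m` to `m + 1` and putting the new element `m` into
neither set, into `F₁`, or into both `F₁` and `F₂` preserves this condition and raises the genus by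
1, 2 or 3 respectively. The first two operations have disjoint images (they differ on `m ∈ F₁`),
which gives the lower bound; conversely, removing `m - 1` from a triple of positive genus undoes
one of the three operations, which gives the upper bound.
-/

open Finset

lemma exists_forall_add_notMem (G : Finset ℕ) : ∃ s, 0 < s ∧ ∀ n, s + n ∉ G :=
  ⟨G.sup id + 1, Nat.succ_pos _, fun n h => by
    have := Finset.le_sup (f := id) h
    simp only [id] at this
    omega⟩

lemma mult_pos_and_notMem (G : Finset ℕ) : 0 < mult G ∧ mult G ∉ G := by
  obtain ⟨s, hs, hG⟩ := exists_forall_add_notMem G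
  exact Nat.sInf_mem (s := {s : ℕ | 0 < s ∧ s ∉ G}) ⟨s, hs, by simpa using hG 0⟩

lemma mult_pos (G : Finset ℕ) : 0 < mult G := (mult_pos_and_notMem G).1

lemma mult_notMem (G : Finset ℕ) : mult G ∉ G := (mult_pos_and_notMem G).2

lemma mem_of_lt_mult {G : Finset ℕ} {s : ℕ} (hs : 0 < s) (h : s < mult G) : s ∈ G := by
  by_contra hsG
  have : mult G ≤ s := Nat.sInf_le ⟨hs, hsG⟩
  omega

lemma mult_eq_of_forall_mem {G : Finset ℕ} {m : ℕ} (hm : 0 < m) (hmG : m ∉ G)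
    (h : ∀ s, 0 < s → s < m → s ∈ G) : mult G = m := by
  refine le_antisymm (Nat.sInf_le ⟨hm, hmG⟩) ?_
  by_contra! hlt
  exact mult_notMem G (h _ (mult_pos G) hlt)

lemma gapConductor_le_iff {G : Finset ℕ} {s : ℕ} (hs : 0 < s) :
    gapConductor G ≤ s ↔ ∀ x ∈ G, x < s := by
  constructor
  · intro h x hx
    obtain ⟨-, hc⟩ : gapConductor G ∈ {s : ℕ | 0 < s ∧ ∀ n : ℕ, s + n ∉ G} :=
      Nat.sInf_mem (exists_forall_add_notMem G)
    by_contra! hsx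
    exact hc (x - gapConductor G) (by rwa [Nat.add_sub_cancel' (by omega)])
  · intro h
    exact Nat.sInf_le ⟨hs, fun n hn => by have := h _ hn; omega⟩

lemma gapDepth_le_iff {G : Finset ℕ} {q : ℕ} (hq : 0 < q) :
    gapDepth G ≤ q ↔ ∀ x ∈ G, x < q * mult G := by
  have hm := mult_pos G
  rw [← gapConductor_le_iff (Nat.mul_pos hq hm), gapDepth, ← Nat.lt_succ_iff,
    Nat.div_lt_iff_lt_mul hm, Nat.succ_mul]
  omega

lemma IsGapset.two_mul_mult_notMem {G : Finset ℕ} (hG : IsGapset G) : 2 * mult G ∉ G := fun h => by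
  rcases hG.2 _ h _ _ (mult_pos G) (mult_pos G) (two_mul _).symm with h' | h' <;>
    exact mult_notMem G h'

/-- The triple `(m, F₁, F₂)` stands for the set `[1, m - 1] ∪ (m + F₁) ∪ (2m + F₂)`. -/
@[ext]
structure LayerTriple where
  m : ℕ
  F₁ : Finset ℕ
  F₂ : Finset ℕ

namespace LayerTriple

structure Valid (t : LayerTriple) : Prop where
  m_pos : 0 < t.m
  F₁_subset : t.F₁ ⊆ Ioo 0 t.m
  F₂_subset : t.F₂ ⊆ Ioo 0 t.m
  mem_F₁_of_add_eq : ∀ z ∈ t.F₂, ∀ a b, a + b = z → a ∈ t.F₁ ∨ b ∈ t.F₁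

def genus (t : LayerTriple) : ℕ := t.m - 1 + #t.F₁ + #t.F₂

def validOfGenus (g : ℕ) : Set LayerTriple := {t | t.Valid ∧ t.genus = g}

variable {t : LayerTriple}

lemma Valid.mem_F₁ (ht : t.Valid) {a : ℕ} (ha : a ∈ t.F₁) : 0 < a ∧ a < t.m :=
  mem_Ioo.1 (ht.F₁_subset ha)

lemma Valid.mem_F₂ (ht : t.Valid) {a : ℕ} (ha : a ∈ t.F₂) : 0 < a ∧ a < t.m :=
  mem_Ioo.1 (ht.F₂_subset ha)

lemma Valid.F₂_subset_F₁ (ht : t.Valid) : t.F₂ ⊆ t.F₁ := fun z hz =>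
  (ht.mem_F₁_of_add_eq z hz 0 z (zero_add z)).resolve_left fun h => (ht.mem_F₁ h).1.false

lemma finite_validOfGenus (g : ℕ) : (validOfGenus g).Finite := by
  refine (((range (g + 2) ×ˢ (range (g + 2)).powerset ×ˢ (range (g + 2)).powerset :
    Finset _) : Set (ℕ × Finset ℕ × Finset ℕ)).toFinite.image
      fun p => (⟨p.1, p.2.1, p.2.2⟩ : LayerTriple)).subset ?_
  rintro ⟨m, F₁, F₂⟩ ⟨ht, hg⟩
  simp only [genus] at hg
  have hIoo : Ioo 0 m ⊆ range (g + 2) := fun x hx => by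
    have := mem_Ioo.1 hx
    exact mem_range.2 (by omega)
  refine ⟨(m, F₁, F₂), ?_, rfl⟩
  simp only [coe_product, Set.mem_prod, mem_coe, mem_range, mem_powerset]
  exact ⟨by omega, ht.F₁_subset.trans hIoo, ht.F₂_subset.trans hIoo⟩

def toGapset (t : LayerTriple) : Finset ℕ :=
  Ioo 0 t.m ∪ t.F₁.map (addRightEmbedding t.m) ∪ t.F₂.map (addRightEmbedding (2 * t.m))

lemma mem_toGapset (ht : t.Valid) {x : ℕ} :
    x ∈ t.toGapset ↔ (0 < x ∧ x < t.m) ∨ (t.m < x ∧ x < 2 * t.m ∧ x - t.m ∈ t.F₁) ∨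
      (2 * t.m < x ∧ x - 2 * t.m ∈ t.F₂) := by
  simp only [toGapset, mem_union, mem_map, addRightEmbedding_apply, mem_Ioo]
  constructor
  · rintro ((h | ⟨a, ha, rfl⟩) | ⟨a, ha, rfl⟩)
    · exact Or.inl h
    · have := ht.mem_F₁ ha
      exact Or.inr (Or.inl ⟨by omega, by omega, by simpa using ha⟩)
    · have := ht.mem_F₂ ha
      exact Or.inr (Or.inr ⟨by omega, by simpa using ha⟩)
  · rintro (h | ⟨h₁, -, h⟩ | ⟨h₁, h⟩)
    · exact Or.inl (Or.inl h)
    · exact Or.inl (Or.inr ⟨_, h, Nat.sub_add_cancel h₁.le⟩)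
    · exact Or.inr ⟨_, h, Nat.sub_add_cancel h₁.le⟩

lemma card_toGapset (ht : t.Valid) : #t.toGapset = t.genus := by
  have hdisj₁ : Disjoint (Ioo 0 t.m) (t.F₁.map (addRightEmbedding t.m)) :=
    disjoint_left.2 fun x hx hx' => by
      obtain ⟨a, -, rfl⟩ := mem_map.1 hx'
      simp only [addRightEmbedding_apply, mem_Ioo] at hx
      omega
  have hdisj₂ : Disjoint (Ioo 0 t.m ∪ t.F₁.map (addRightEmbedding t.m))
      (t.F₂.map (addRightEmbedding (2 * t.m))) :=
    disjoint_right.2 fun x hx hx' => by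
      obtain ⟨a, ha, rfl⟩ := mem_map.1 hx
      have := ht.mem_F₂ ha
      rcases mem_union.1 hx' with h | h
      · simp only [addRightEmbedding_apply, mem_Ioo] at h
        omega
      · obtain ⟨b, hb, hab⟩ := mem_map.1 h
        have := ht.mem_F₁ hb
        simp only [addRightEmbedding_apply] at hab
        omega
  rw [toGapset, card_union_of_disjoint hdisj₂, card_union_of_disjoint hdisj₁, card_map,
    card_map, Nat.card_Ioo, Nat.sub_zero, genus]

lemma isGapset_toGapset (ht : t.Valid) : IsGapset t.toGapset := by
  refine ⟨by rw [mem_toGapset ht]; omega, fun z hz x y hx hy hxy => ?_⟩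
  simp only [mem_toGapset ht] at hz ⊢
  rcases hz with hz | ⟨hz₁, -, hz⟩ | ⟨hz₁, hz⟩
  · omega
  · have := ht.mem_F₁ hz
    omega
  · have := ht.mem_F₂ hz
    by_cases hxm : x < t.m
    · omega
    by_cases hym : y < t.m
    · omega
    rcases ht.mem_F₁_of_add_eq _ hz (x - t.m) (y - t.m) (by omega) with h | h
    · have := ht.mem_F₁ h
      exact Or.inl (Or.inr (Or.inl ⟨by omega, by omega, h⟩))
    · have := ht.mem_F₁ h
      exact Or.inr (Or.inr (Or.inl ⟨by omega, by omega, h⟩))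

lemma mult_toGapset (ht : t.Valid) : mult t.toGapset = t.m :=
  mult_eq_of_forall_mem ht.m_pos (by rw [mem_toGapset ht]; omega)
    fun s hs hsm => (mem_toGapset ht).2 (Or.inl ⟨hs, hsm⟩)

lemma gapDepth_toGapset_le (ht : t.Valid) : gapDepth t.toGapset ≤ 3 := by
  refine (gapDepth_le_iff three_pos).2 fun x hx => ?_
  rw [mult_toGapset ht]
  rcases (mem_toGapset ht).1 hx with h | h | ⟨h₁, h⟩
  · omega
  · omega
  · have := ht.mem_F₂ h
    omega

noncomputable def ofGapset (G : Finset ℕ) : LayerTriple where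
  m := mult G
  F₁ := (Ioo 0 (mult G)).filter (· + mult G ∈ G)
  F₂ := (Ioo 0 (mult G)).filter (· + 2 * mult G ∈ G)

lemma ofGapset_toGapset (ht : t.Valid) : ofGapset t.toGapset = t := by
  have hm := mult_toGapset ht
  ext a
  · exact hm
  · simp only [ofGapset, hm, mem_filter, mem_Ioo, mem_toGapset ht]
    constructor
    · rintro ⟨⟨-, ha⟩, h | ⟨-, -, h⟩ | h⟩
      · omega
      · simpa using h
      · omega
    · intro h
      have := ht.mem_F₁ h
      exact ⟨this, Or.inr (Or.inl ⟨by omega, by omega, by simpa using h⟩)⟩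
  · simp only [ofGapset, hm, mem_filter, mem_Ioo, mem_toGapset ht]
    constructor
    · rintro ⟨⟨-, ha⟩, h | ⟨-, h, -⟩ | ⟨-, h⟩⟩
      · omega
      · omega
      · simpa using h
    · intro h
      have := ht.mem_F₂ h
      exact ⟨this, Or.inr (Or.inr ⟨by omega, by simpa using h⟩)⟩

lemma valid_ofGapset {G : Finset ℕ} (hG : IsGapset G) : (ofGapset G).Valid := by
  refine ⟨mult_pos G, filter_subset _ _, filter_subset _ _, fun z hz a b hab => ?_⟩
  simp only [ofGapset, mem_filter, mem_Ioo] at hz ⊢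
  have hF₁ : ∀ c ≤ z, c + mult G ∈ G → (0 < c ∧ c < mult G) ∧ c + mult G ∈ G := fun c hc h =>
    ⟨⟨Nat.pos_of_ne_zero fun hc0 => mult_notMem G (by simpa [hc0] using h), by omega⟩, h⟩
  rcases hG.2 _ hz.2 (a + mult G) (b + mult G) (by have := mult_pos G; omega)
    (by have := mult_pos G; omega) (by omega) with h | h
  · exact Or.inl (hF₁ a (by omega) h)
  · exact Or.inr (hF₁ b (by omega) h)

lemma toGapset_ofGapset {G : Finset ℕ} (hG : IsGapset G) (hd : gapDepth G ≤ 3) :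
    (ofGapset G).toGapset = G := by
  ext x
  rw [mem_toGapset (valid_ofGapset hG)]
  simp only [ofGapset, mem_filter, mem_Ioo]
  constructor
  · rintro (⟨h₀, h⟩ | ⟨h₁, -, -, h⟩ | ⟨h₁, -, h⟩)
    · exact mem_of_lt_mult h₀ h
    · rwa [Nat.sub_add_cancel h₁.le] at h
    · rwa [Nat.sub_add_cancel h₁.le] at h
  · intro hx
    have hx₀ : x ≠ 0 := ne_of_mem_of_not_mem hx hG.1
    have hxm : x ≠ mult G := ne_of_mem_of_not_mem hx (mult_notMem G)
    have hx2m : x ≠ 2 * mult G := ne_of_mem_of_not_mem hx hG.two_mul_mult_notMem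
    have hx3m : x < 3 * mult G := (gapDepth_le_iff three_pos).1 hd x hx
    by_cases h₁ : x < mult G
    · exact Or.inl ⟨by omega, h₁⟩
    by_cases h₂ : x < 2 * mult G
    · exact Or.inr (Or.inl ⟨by omega, h₂, ⟨by omega, by omega⟩,
        by rwa [Nat.sub_add_cancel (by omega)]⟩)
    · exact Or.inr (Or.inr ⟨by omega, ⟨by omega, by omega⟩,
        by rwa [Nat.sub_add_cancel (by omega)]⟩)

lemma bijOn_toGapset (g : ℕ) :
    Set.BijOn toGapset (validOfGenus g) {G | IsGapset G ∧ #G = g ∧ gapDepth G ≤ 3} :=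
  Set.InvOn.bijOn ⟨fun _ ht => ofGapset_toGapset ht.1, fun _ hG => toGapset_ofGapset hG.1 hG.2.2⟩
    (fun _ ⟨ht, hg⟩ => ⟨isGapset_toGapset ht, (card_toGapset ht).trans hg, gapDepth_toGapset_le ht⟩)
    fun G ⟨hG, hg, hd⟩ => ⟨valid_ofGapset hG, by
      rw [← hg, ← card_toGapset (valid_ofGapset hG), toGapset_ofGapset hG hd]⟩

def raise (t : LayerTriple) : LayerTriple := ⟨t.m + 1, t.F₁, t.F₂⟩

def raiseMark₁ (t : LayerTriple) : LayerTriple := ⟨t.m + 1, insert t.m t.F₁, t.F₂⟩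

def raiseMark₂ (t : LayerTriple) : LayerTriple := ⟨t.m + 1, insert t.m t.F₁, insert t.m t.F₂⟩

def lower (t : LayerTriple) : LayerTriple := ⟨t.m - 1, t.F₁.erase (t.m - 1), t.F₂.erase (t.m - 1)⟩

lemma Valid.m_notMem_F₁ (ht : t.Valid) : t.m ∉ t.F₁ := fun h => (ht.mem_F₁ h).2.false

lemma Valid.m_notMem_F₂ (ht : t.Valid) : t.m ∉ t.F₂ := fun h => (ht.mem_F₂ h).2.false

lemma Valid.raise (ht : t.Valid) : t.raise.Valid where
  m_pos := Nat.succ_pos _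
  F₁_subset := ht.F₁_subset.trans (Ioo_subset_Ioo_right (Nat.le_succ _))
  F₂_subset := ht.F₂_subset.trans (Ioo_subset_Ioo_right (Nat.le_succ _))
  mem_F₁_of_add_eq := ht.mem_F₁_of_add_eq

lemma Valid.raiseMark₁ (ht : t.Valid) : t.raiseMark₁.Valid where
  m_pos := Nat.succ_pos _
  F₁_subset := insert_subset (mem_Ioo.2 ⟨ht.m_pos, Nat.lt_succ_self _⟩)
    (ht.F₁_subset.trans (Ioo_subset_Ioo_right (Nat.le_succ _)))
  F₂_subset := ht.F₂_subset.trans (Ioo_subset_Ioo_right (Nat.le_succ _))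
  mem_F₁_of_add_eq z hz a b hab :=
    (ht.mem_F₁_of_add_eq z hz a b hab).imp (mem_insert_of_mem ·) (mem_insert_of_mem ·)

lemma Valid.lower (ht : t.Valid) (hm : 2 ≤ t.m) : t.lower.Valid where
  m_pos := by simp only [LayerTriple.lower]; omega
  F₁_subset a ha := by
    obtain ⟨ha', ha⟩ := mem_erase.1 ha
    have := ht.mem_F₁ ha
    exact mem_Ioo.2 (show 0 < a ∧ a < t.m - 1 by omega)
  F₂_subset a ha := by
    obtain ⟨ha', ha⟩ := mem_erase.1 ha
    have := ht.mem_F₂ ha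
    exact mem_Ioo.2 (show 0 < a ∧ a < t.m - 1 by omega)
  mem_F₁_of_add_eq z hz a b hab := by
    obtain ⟨hz', hz⟩ := mem_erase.1 hz
    have := ht.mem_F₂ hz
    exact (ht.mem_F₁_of_add_eq z hz a b hab).imp (mem_erase.2 ⟨by omega, ·⟩)
      (mem_erase.2 ⟨by omega, ·⟩)

lemma genus_raise (ht : t.Valid) : t.raise.genus = t.genus + 1 := by
  have := ht.m_pos
  simp only [genus, LayerTriple.raise]
  omega

lemma genus_raiseMark₁ (ht : t.Valid) : t.raiseMark₁.genus = t.genus + 2 := by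
  have := ht.m_pos
  simp only [genus, LayerTriple.raiseMark₁, card_insert_of_notMem ht.m_notMem_F₁]
  omega

lemma genus_raiseMark₂ (ht : t.Valid) : t.raiseMark₂.genus = t.genus + 3 := by
  have := ht.m_pos
  simp only [genus, LayerTriple.raiseMark₂, card_insert_of_notMem ht.m_notMem_F₁,
    card_insert_of_notMem ht.m_notMem_F₂]
  omega

lemma raise_lower (ht : t.Valid) (hm : 2 ≤ t.m) (h₁ : t.m - 1 ∉ t.F₁) : t.lower.raise = t := by
  have h₂ : t.m - 1 ∉ t.F₂ := fun h => h₁ (ht.F₂_subset_F₁ h)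
  ext1
  · simp only [LayerTriple.raise, LayerTriple.lower]
    omega
  · exact erase_eq_of_notMem h₁
  · exact erase_eq_of_notMem h₂

lemma raiseMark₁_lower (ht : t.Valid) (h₁ : t.m - 1 ∈ t.F₁) (h₂ : t.m - 1 ∉ t.F₂) :
    t.lower.raiseMark₁ = t := by
  have := ht.mem_F₁ h₁
  ext1
  · simp only [LayerTriple.raiseMark₁, LayerTriple.lower]
    omega
  · exact insert_erase h₁
  · exact erase_eq_of_notMem h₂

lemma raiseMark₂_lower (ht : t.Valid) (h₂ : t.m - 1 ∈ t.F₂) : t.lower.raiseMark₂ = t := by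
  have := ht.mem_F₂ h₂
  ext1
  · simp only [LayerTriple.raiseMark₂, LayerTriple.lower]
    omega
  · exact insert_erase (ht.F₂_subset_F₁ h₂)
  · exact insert_erase h₂

lemma raise_injective : Function.Injective raise := fun s t h => by
  simp only [LayerTriple.raise, mk.injEq, Nat.add_right_cancel_iff] at h
  exact LayerTriple.ext h.1 h.2.1 h.2.2

lemma raiseMark₁_injOn : Set.InjOn raiseMark₁ {t | t.Valid} := fun s hs t ht h => by
  simp only [LayerTriple.raiseMark₁, mk.injEq, Nat.add_right_cancel_iff] at h
  obtain ⟨hm, h₁, h₂⟩ := h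
  refine LayerTriple.ext hm ?_ h₂
  rw [← erase_insert hs.m_notMem_F₁, h₁, hm, erase_insert ht.m_notMem_F₁]

lemma raise_ne_raiseMark₁ {s : LayerTriple} (hs : s.Valid) (t : LayerTriple) :
    s.raise ≠ t.raiseMark₁ := fun h => by
  simp only [LayerTriple.raise, LayerTriple.raiseMark₁, mk.injEq, Nat.add_right_cancel_iff] at h
  obtain ⟨hm, h₁, -⟩ := h
  exact hs.m_notMem_F₁ (h₁ ▸ hm ▸ mem_insert_self _ _)

lemma Valid.two_le_m (ht : t.Valid) (hg : t.genus ≠ 0) : 2 ≤ t.m := by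
  by_contra! hm
  have hm1 : t.m = 1 := by have := ht.m_pos; omega
  have h₁ : t.F₁ = ∅ := eq_empty_of_forall_notMem fun a ha => by have := ht.mem_F₁ ha; omega
  have h₂ : t.F₂ = ∅ := eq_empty_of_forall_notMem fun a ha => by have := ht.mem_F₂ ha; omega
  simp [genus, hm1, h₁, h₂] at hg

lemma image_raise_union_image_raiseMark₁_subset {g : ℕ} (hg : 2 ≤ g) :
    raise '' validOfGenus (g - 1) ∪ raiseMark₁ '' validOfGenus (g - 2) ⊆ validOfGenus g := by
  rintro _ (⟨t, ⟨ht, htg⟩, rfl⟩ | ⟨t, ⟨ht, htg⟩, rfl⟩)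
  · exact ⟨ht.raise, by rw [genus_raise ht]; omega⟩
  · exact ⟨ht.raiseMark₁, by rw [genus_raiseMark₁ ht]; omega⟩

lemma validOfGenus_subset_union_images {g : ℕ} (hg : g ≠ 0) :
    validOfGenus g ⊆ raise '' validOfGenus (g - 1) ∪ raiseMark₁ '' validOfGenus (g - 2) ∪
      raiseMark₂ '' validOfGenus (g - 3) := by
  rintro t ⟨ht, rfl⟩
  have hm := ht.two_le_m hg
  have hl := ht.lower hm
  by_cases h₁ : t.m - 1 ∈ t.F₁
  · by_cases h₂ : t.m - 1 ∈ t.F₂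
    · have := genus_raiseMark₂ hl
      rw [raiseMark₂_lower ht h₂] at this
      exact Or.inr ⟨t.lower, ⟨hl, by omega⟩, raiseMark₂_lower ht h₂⟩
    · have := genus_raiseMark₁ hl
      rw [raiseMark₁_lower ht h₁ h₂] at this
      exact Or.inl (Or.inr ⟨t.lower, ⟨hl, by omega⟩, raiseMark₁_lower ht h₁ h₂⟩)
  · have := genus_raise hl
    rw [raise_lower ht hm h₁] at this
    exact Or.inl (Or.inl ⟨t.lower, ⟨hl, by omega⟩, raise_lower ht hm h₁⟩)


lemma ncard_validOfGenus_sub_one_add_sub_two_le {g : ℕ} (hg : 2 ≤ g) :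
    (validOfGenus (g - 1)).ncard + (validOfGenus (g - 2)).ncard ≤ (validOfGenus g).ncard := by
  have hfin := finite_validOfGenus
  have hdisj : Disjoint (raise '' validOfGenus (g - 1)) (raiseMark₁ '' validOfGenus (g - 2)) :=
    Set.disjoint_left.2 fun _ ⟨s, hs, hs'⟩ ⟨t, _, ht'⟩ =>
      raise_ne_raiseMark₁ hs.1 t (hs'.trans ht'.symm)
  calc (validOfGenus (g - 1)).ncard + (validOfGenus (g - 2)).ncard
      = (raise '' validOfGenus (g - 1)).ncard + (raiseMark₁ '' validOfGenus (g - 2)).ncard := by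
        rw [raise_injective.injOn.ncard_image, (raiseMark₁_injOn.mono fun _ ht => ht.1).ncard_image]
    _ = (raise '' validOfGenus (g - 1) ∪ raiseMark₁ '' validOfGenus (g - 2)).ncard :=
        (Set.ncard_union_eq hdisj ((hfin _).image _) ((hfin _).image _)).symm
    _ ≤ (validOfGenus g).ncard :=
        Set.ncard_le_ncard (image_raise_union_image_raiseMark₁_subset hg) (hfin g)

lemma ncard_validOfGenus_le {g : ℕ} (hg : g ≠ 0) :
    (validOfGenus g).ncard ≤
      (validOfGenus (g - 1)).ncard + (validOfGenus (g - 2)).ncard +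
        (validOfGenus (g - 3)).ncard := by
  have hfin := finite_validOfGenus
  calc (validOfGenus g).ncard
      ≤ (raise '' validOfGenus (g - 1) ∪ raiseMark₁ '' validOfGenus (g - 2) ∪
          raiseMark₂ '' validOfGenus (g - 3)).ncard :=
        Set.ncard_le_ncard (validOfGenus_subset_union_images hg)
          ((((hfin _).image _).union ((hfin _).image _)).union ((hfin _).image _))
    _ ≤ (raise '' validOfGenus (g - 1)).ncard + (raiseMark₁ '' validOfGenus (g - 2)).ncard +
          (raiseMark₂ '' validOfGenus (g - 3)).ncard :=
        (Set.ncard_union_le _ _).trans (Nat.add_le_add_right (Set.ncard_union_le _ _) _)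
    _ ≤ _ := Nat.add_le_add (Nat.add_le_add (Set.ncard_image_le (hfin _))
          (Set.ncard_image_le (hfin _))) (Set.ncard_image_le (hfin _))

end LayerTriple

lemma nDepth3_eq_ncard_validOfGenus (g : ℕ) : nDepth3 g = (LayerTriple.validOfGenus g).ncard :=
  (LayerTriple.bijOn_toGapset g).ncard_eq.symm

theorem eliahou_fromentin (g : ℕ) (hg : 3 ≤ g) :
    nDepth3 (g - 1) + nDepth3 (g - 2) ≤ nDepth3 g ∧
      nDepth3 g ≤ nDepth3 (g - 1) + nDepth3 (g - 2) + nDepth3 (g - 3) := by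
  simp only [nDepth3_eq_ncard_validOfGenus]
  exact ⟨LayerTriple.ncard_validOfGenus_sub_one_add_sub_two_le (by omega),
    LayerTriple.ncard_validOfGenus_le (by omega)⟩
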